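/- arXiv:2407.00953 — 2 statements merged into one kernel-verified Lean document; each statement's English description precedes it below -/
import Mathlib

section
/- For all x ≥ 0, J₀(√2·x) − 2·J₀(x) + 1 = (2/π)·∫₀^{π/2} (1 − cos(x·cos t))·(1 − cos(x·sin t)) dt, where J₀ is the Bessel function of the first kind of order 0. -/
/-!
Expanding the product and writing `cos (x cos t) cos (x sin t)` as a half-sum of
`cos (x (sin t ± cos t)) = cos (√2 x sin (t ± π/4))` reduces the claim to
`∫₀^{π/2} f (t + π/4) + ∫₀^{π/2} f (t - π/4) = 2 ∫₀^{π/2} f` for `f t = cos (√2 x sin t)`.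
The left side is the integral of `f` over `[-π/4, 3π/4]`, a full period of `f`, and `f` is
symmetric about `π/2`.
-/

open Real MeasureTheory

/-- Bessel function of the first kind of order 0, via its integral representation. -/
noncomputable def J0 (x : ℝ) : ℝ := (2 / π) * ∫ t in (0:ℝ)..(π/2), Real.cos (x * Real.sin t)

open intervalIntegral

theorem intervalIntegral.integral_eq_two_mul_integral_of_symmetric {f : ℝ → ℝ} {a b : ℝ}
    (hf : ∀ t, f (a + b - t) = f t) (hi : IntervalIntegrable f volume a b) :
    ∫ t in a..b, f t = 2 * ∫ t in a..(a + b) / 2, f t := by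
  have hmid : (a + b) / 2 ∈ Set.uIcc a b := by
    rcases le_total a b with h | h
    · exact Set.mem_uIcc_of_le (by linarith) (by linarith)
    · exact Set.mem_uIcc_of_ge (by linarith) (by linarith)
  have hright : ∫ t in (a + b) / 2..b, f t = ∫ t in a..(a + b) / 2, f t := by
    conv_lhs => arg 1; ext t; rw [← hf t]
    rw [integral_comp_sub_left]
    ring_nf
  rw [← integral_add_adjacent_intervals (hi.mono_set (Set.uIcc_subset_uIcc_left hmid))
    (hi.mono_set (Set.uIcc_subset_uIcc_right hmid)), hright, two_mul]

theorem sqrt_two_mul_sin_add_pi_div_four (t : ℝ) :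
    √2 * sin (t + π / 4) = sin t + cos t := by
  rw [sin_add, sin_pi_div_four, cos_pi_div_four]
  linear_combination (sin t + cos t) / 2 * mul_self_sqrt (zero_le_two : (0:ℝ) ≤ 2)

theorem sqrt_two_mul_sin_sub_pi_div_four (t : ℝ) :
    √2 * sin (t - π / 4) = sin t - cos t := by
  rw [sin_sub, sin_pi_div_four, cos_pi_div_four]
  linear_combination (sin t - cos t) / 2 * mul_self_sqrt (zero_le_two : (0:ℝ) ≤ 2)

theorem one_sub_cos_mul_one_sub_cos (x t : ℝ) :
    (1 - cos (x * cos t)) * (1 - cos (x * sin t)) =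
      1 - cos (x * cos t) - cos (x * sin t) +
        (cos (√2 * x * sin (t + π / 4)) + cos (√2 * x * sin (t - π / 4))) / 2 := by
  have hadd : √2 * x * sin (t + π / 4) = x * sin t + x * cos t := by
    rw [mul_right_comm, sqrt_two_mul_sin_add_pi_div_four]; ring
  have hsub : √2 * x * sin (t - π / 4) = x * sin t - x * cos t := by
    rw [mul_right_comm, sqrt_two_mul_sin_sub_pi_div_four]; ring
  rw [hadd, hsub, cos_add, cos_sub]
  ring

theorem integral_cos_mul_cos_eq_integral_cos_mul_sin (x : ℝ) :
    ∫ t in (0:ℝ)..π / 2, cos (x * cos t) = ∫ t in (0:ℝ)..π / 2, cos (x * sin t) := by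
  simpa only [sin_pi_div_two_sub, sub_zero, sub_self] using
    integral_comp_sub_left (fun t => cos (x * sin t)) (a := 0) (b := π / 2) (π / 2)

theorem integral_cos_mul_sin_add_pi_div_four_add_sub (c : ℝ) :
    (∫ t in (0:ℝ)..π / 2, cos (c * sin (t + π / 4))) +
        ∫ t in (0:ℝ)..π / 2, cos (c * sin (t - π / 4)) =
      2 * ∫ t in (0:ℝ)..π / 2, cos (c * sin t) := by
  set f : ℝ → ℝ := fun t => cos (c * sin t)
  have hf : Continuous f := by fun_prop
  have hper : Function.Periodic f π := fun t => by simp [f, sin_add_pi]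
  calc (∫ t in (0:ℝ)..π / 2, f (t + π / 4)) + ∫ t in (0:ℝ)..π / 2, f (t - π / 4)
      = (∫ t in -(π / 4)..π / 4, f t) + ∫ t in π / 4..-(π / 4) + π, f t := by
        rw [integral_comp_add_right, integral_comp_sub_right, add_comm]
        ring_nf
    _ = ∫ t in (0:ℝ)..0 + π, f t := by
        rw [integral_add_adjacent_intervals (hf.intervalIntegrable _ _)
          (hf.intervalIntegrable _ _), hper.intervalIntegral_add_eq]
    _ = 2 * ∫ t in (0:ℝ)..π / 2, f t := by
        rw [zero_add, integral_eq_two_mul_integral_of_symmetric (fun t => by simp [f, sin_pi_sub])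
          (hf.intervalIntegrable _ _), zero_add]

theorem integral_one_sub_cos_mul_one_sub_cos (x : ℝ) :
    ∫ t in (0:ℝ)..π / 2, (1 - cos (x * cos t)) * (1 - cos (x * sin t)) =
      π / 2 - 2 * (∫ t in (0:ℝ)..π / 2, cos (x * sin t)) +
        ∫ t in (0:ℝ)..π / 2, cos (√2 * x * sin t) := by
  simp_rw [one_sub_cos_mul_one_sub_cos]
  rw [intervalIntegral.integral_add, intervalIntegral.integral_sub, intervalIntegral.integral_sub,
    intervalIntegral.integral_div, intervalIntegral.integral_add, intervalIntegral.integral_const,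
    integral_cos_mul_cos_eq_integral_cos_mul_sin]
  · simp only [sub_zero, smul_eq_mul, mul_one]
    linear_combination integral_cos_mul_sin_add_pi_div_four_add_sub (√2 * x) / 2
  all_goals exact Continuous.intervalIntegrable (by fun_prop) _ _

theorem bessel_combination_integral_repr_general (x : ℝ) :
    J0 (Real.sqrt 2 * x) - 2 * J0 x + 1 =
      (2 / π) * ∫ t in (0:ℝ)..(π/2),
        (1 - Real.cos (x * Real.cos t)) * (1 - Real.cos (x * Real.sin t)) := by
  rw [integral_one_sub_cos_mul_one_sub_cos, J0, J0]
  field_simp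
  ring

theorem bessel_combination_integral_repr (x : ℝ) (hx : 0 ≤ x) :
    J0 (Real.sqrt 2 * x) - 2 * J0 x + 1 =
      (2 / π) * ∫ t in (0:ℝ)..(π/2),
        (1 - Real.cos (x * Real.cos t)) * (1 - Real.cos (x * Real.sin t)) :=
  bessel_combination_integral_repr_general x
end

section
/- For all x ≥ 0, J₀(√2·x) − 2·J₀(x) + 1 ≥ 0, where J₀ is the Bessel function of the first kind of order 0. -/
open Real MeasureTheory

lemma S_shift (y c : ℝ) :
    (∫ θ in (0:ℝ)..(2*π), Real.cos (y * Real.sin (θ + c)))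
      = ∫ θ in (0:ℝ)..(2*π), Real.cos (y * Real.sin θ) := by
  have hper : Function.Periodic (fun θ : ℝ => Real.cos (y * Real.sin θ)) (2*π) := by
    intro θ; simp [Real.sin_add_two_pi]
  have h1 := intervalIntegral.integral_comp_add_right
    (a := (0:ℝ)) (b := 2*π) (fun θ : ℝ => Real.cos (y * Real.sin θ)) c
  rw [h1, zero_add, add_comm (2*π) c]
  exact hper.intervalIntegral_add_eq c 0 |>.trans (by rw [zero_add])

lemma cos_sin_intervalIntegrable (y a b : ℝ) :
    IntervalIntegrable (fun θ : ℝ => Real.cos (y * Real.sin θ)) volume a b :=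
  (Real.continuous_cos.comp (continuous_const.mul Real.continuous_sin)).intervalIntegrable a b

lemma S_J0 (y : ℝ) :
    (∫ θ in (0:ℝ)..(2*π), Real.cos (y * Real.sin θ)) = 2 * π * J0 y := by
  have hpi : (0:ℝ) < π := Real.pi_pos
  set g : ℝ → ℝ := fun θ => Real.cos (y * Real.sin θ) with hg
  have hhalf : (∫ θ in (π/2:ℝ)..π, g θ) = ∫ θ in (0:ℝ)..(π/2), g θ := by
    have h := intervalIntegral.integral_comp_sub_left (a := (0:ℝ)) (b := π/2) g π
    have h2 : ∀ t : ℝ, g (π - t) = g t := by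
      intro t; simp only [hg, Real.sin_pi_sub]
    simp only [h2] at h
    rw [show π - π/2 = π/2 by ring, show π - (0:ℝ) = π by ring] at h
    exact h.symm
  have h1 : (∫ θ in (0:ℝ)..π, g θ) = 2 * ∫ θ in (0:ℝ)..(π/2), g θ := by
    rw [← intervalIntegral.integral_add_adjacent_intervals
      (cos_sin_intervalIntegrable y 0 (π/2)) (cos_sin_intervalIntegrable y (π/2) π), hhalf]
    ring
  have h2 : (∫ θ in π..(2*π), g θ) = ∫ θ in (0:ℝ)..π, g θ := by
    have h := intervalIntegral.integral_comp_add_right (a := (0:ℝ)) (b := π) g π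
    have h3 : ∀ t : ℝ, g (t + π) = g t := by
      intro t; simp only [hg, Real.sin_add_pi, mul_neg, Real.cos_neg]
    simp only [h3] at h
    rw [zero_add, show π + π = 2*π by ring] at h
    exact h.symm
  have hS : (∫ θ in (0:ℝ)..(2*π), g θ) = 4 * ∫ θ in (0:ℝ)..(π/2), g θ := by
    rw [← intervalIntegral.integral_add_adjacent_intervals
      (cos_sin_intervalIntegrable y 0 π) (cos_sin_intervalIntegrable y π (2*π)), h2, h1]
    ring
  rw [hS, J0]
  field_simp
  ring

theorem bessel_combination_nonneg (x : ℝ) (hx : 0 ≤ x) :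
    0 ≤ J0 (Real.sqrt 2 * x) - 2 * J0 x + 1 := by
  have hpi : (0:ℝ) < π := Real.pi_pos
  have s2 : Real.sqrt 2 * Real.sqrt 2 = 2 := Real.mul_self_sqrt (by norm_num)
  -- pointwise expansion
  have expand : ∀ θ : ℝ,
      (1 - Real.cos (x * Real.cos θ)) * (1 - Real.cos (x * Real.sin θ))
        = 1 - Real.cos (x * Real.cos θ) - Real.cos (x * Real.sin θ)
          + (1/2) * Real.cos (Real.sqrt 2 * x * Real.sin (θ + π/4))
          + (1/2) * Real.cos (Real.sqrt 2 * x * Real.sin (θ + 3*π/4)) := by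
    intro θ
    have h1 : Real.sqrt 2 * x * Real.sin (θ + π/4) = x * Real.cos θ + x * Real.sin θ := by
      rw [Real.sin_add, Real.sin_pi_div_four, Real.cos_pi_div_four]
      linear_combination (x * (Real.sin θ + Real.cos θ) / 2) * s2
    have h2 : Real.sqrt 2 * x * Real.sin (θ + 3*π/4) = x * Real.cos θ - x * Real.sin θ := by
      have e1 : Real.sin (3*π/4:ℝ) = Real.sqrt 2 / 2 := by
        rw [show (3*π/4:ℝ) = π - π/4 by ring, Real.sin_pi_sub, Real.sin_pi_div_four]
      have e2 : Real.cos (3*π/4:ℝ) = -(Real.sqrt 2 / 2) := by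
        rw [show (3*π/4:ℝ) = π - π/4 by ring, Real.cos_pi_sub, Real.cos_pi_div_four]
      rw [Real.sin_add, e1, e2]
      linear_combination (x * (Real.cos θ - Real.sin θ) / 2) * s2
    rw [h1, h2, Real.cos_add, Real.cos_sub]
    ring
  -- the integrals of the two shifted cosines
  have I3 : (∫ θ in (0:ℝ)..(2*π), Real.cos (Real.sqrt 2 * x * Real.sin (θ + π/4)))
      = 2 * π * J0 (Real.sqrt 2 * x) := (S_shift (Real.sqrt 2 * x) (π/4)).trans (S_J0 _)
  have I4 : (∫ θ in (0:ℝ)..(2*π), Real.cos (Real.sqrt 2 * x * Real.sin (θ + 3*π/4)))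
      = 2 * π * J0 (Real.sqrt 2 * x) := (S_shift (Real.sqrt 2 * x) (3*π/4)).trans (S_J0 _)
  have I1 : (∫ θ in (0:ℝ)..(2*π), Real.cos (x * Real.cos θ)) = 2 * π * J0 x := by
    have h : ∀ θ : ℝ, Real.cos (x * Real.cos θ) = Real.cos (x * Real.sin (θ + π/2)) := by
      intro θ; rw [Real.sin_add_pi_div_two]
    rw [intervalIntegral.integral_congr (g := fun θ => Real.cos (x * Real.sin (θ + π/2)))
      (fun θ _ => h θ), S_shift, S_J0]
  have I2 : (∫ θ in (0:ℝ)..(2*π), Real.cos (x * Real.sin θ)) = 2 * π * J0 x := S_J0 x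
  -- integrability of pieces
  have int1 : IntervalIntegrable (fun θ : ℝ => Real.cos (x * Real.cos θ)) volume 0 (2*π) :=
    (Real.continuous_cos.comp (continuous_const.mul Real.continuous_cos)).intervalIntegrable _ _
  have int2 : IntervalIntegrable (fun θ : ℝ => Real.cos (x * Real.sin θ)) volume 0 (2*π) :=
    cos_sin_intervalIntegrable x 0 (2*π)
  have int3 : IntervalIntegrable
      (fun θ : ℝ => (1/2) * Real.cos (Real.sqrt 2 * x * Real.sin (θ + π/4))) volume 0 (2*π) :=
    (continuous_const.mul (Real.continuous_cos.comp (continuous_const.mul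
      (Real.continuous_sin.comp (continuous_id.add continuous_const))))).intervalIntegrable _ _
  have int4 : IntervalIntegrable
      (fun θ : ℝ => (1/2) * Real.cos (Real.sqrt 2 * x * Real.sin (θ + 3*π/4))) volume 0 (2*π) :=
    (continuous_const.mul (Real.continuous_cos.comp (continuous_const.mul
      (Real.continuous_sin.comp (continuous_id.add continuous_const))))).intervalIntegrable _ _
  -- the key integral identity
  have key : (∫ θ in (0:ℝ)..(2*π),
      (1 - Real.cos (x * Real.cos θ)) * (1 - Real.cos (x * Real.sin θ)))
        = 2 * π * (J0 (Real.sqrt 2 * x) - 2 * J0 x + 1) := by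
    rw [intervalIntegral.integral_congr (g := fun θ =>
        1 - Real.cos (x * Real.cos θ) - Real.cos (x * Real.sin θ)
          + (1/2) * Real.cos (Real.sqrt 2 * x * Real.sin (θ + π/4))
          + (1/2) * Real.cos (Real.sqrt 2 * x * Real.sin (θ + 3*π/4)))
      (fun θ _ => expand θ)]
    rw [intervalIntegral.integral_add (((intervalIntegrable_const.sub int1).sub int2).add int3)
      int4,
      intervalIntegral.integral_add ((intervalIntegrable_const.sub int1).sub int2) int3,
      intervalIntegral.integral_sub (intervalIntegrable_const.sub int1) int2,
      intervalIntegral.integral_sub intervalIntegrable_const int1,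
      intervalIntegral.integral_const_mul, intervalIntegral.integral_const_mul,
      I1, I2, I3, I4, intervalIntegral.integral_const]
    simp only [smul_eq_mul]
    ring
  have pos : 0 ≤ ∫ θ in (0:ℝ)..(2*π),
      (1 - Real.cos (x * Real.cos θ)) * (1 - Real.cos (x * Real.sin θ)) := by
    apply intervalIntegral.integral_nonneg (by linarith)
    intro u _
    have a1 := Real.cos_le_one (x * Real.cos u)
    have a2 := Real.cos_le_one (x * Real.sin u)
    nlinarith
  rw [key] at pos
  nlinarith [pos, hpi]
end
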